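/- Fix ω > 0 and η > 0 and let t* > 5/4 be the unique solution of (t* − 5/4) e^{t*} = 4η/ω, and set u = t* − 5/4 > 0. Then the maximum value of the Shiha hazard rate equals h(t*/ω; ω, η) = ω (2u + 1)/(u + 1). -/

import Mathlib

/-
With `t = ω y` and `s = η e^{-t} / ω`, the hazard is `ω (1 + (8t + 2) s) / (1 + (4t + 3) s)`.
The defining equation of `t*` says exactly `s = u / 4` with `u = t* - 5/4`, and then
numerator and denominator factor as `(u + 1)(2u + 1)` and `(u + 1)²`.
-/

open Real

noncomputable def shihaHazard (ω η y : ℝ) : ℝ :=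
  ω * (ω + (2 * η + 8 * ω * η * y) * Real.exp (-ω * y))
    / (ω + (3 * η + 4 * ω * η * y) * Real.exp (-ω * y))

theorem shihaHazard_div_eq {ω : ℝ} (hω : ω ≠ 0) (η t : ℝ) :
    shihaHazard ω η (t / ω)
      = ω * (1 + (8 * t + 2) * (η * exp (-t) / ω)) / (1 + (4 * t + 3) * (η * exp (-t) / ω)) := by
  have hscale : -ω * (t / ω) = -t := by field_simp
  have hnum : ω + (2 * η + 8 * ω * η * (t / ω)) * exp (-t)
      = ω * (1 + (8 * t + 2) * (η * exp (-t) / ω)) := by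
    field_simp
    ring
  have hden : ω + (3 * η + 4 * ω * η * (t / ω)) * exp (-t)
      = ω * (1 + (4 * t + 3) * (η * exp (-t) / ω)) := by
    field_simp
    ring
  rw [shihaHazard, hscale, hnum, hden, mul_div_assoc, mul_div_mul_left _ _ hω]
  exact (mul_div_assoc _ _ _).symm

theorem mul_exp_neg_div_eq_of_critical {ω η t : ℝ} (hω : ω ≠ 0)
    (heq : (t - 5 / 4) * exp t = 4 * η / ω) :
    η * exp (-t) / ω = (t - 5 / 4) / 4 := by
  rw [exp_neg, eq_div_iff four_ne_zero, ← mul_inv_cancel_right₀ (exp_pos t).ne' (t - 5 / 4), heq]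
  field_simp

theorem hazard_ratio_at_critical {t : ℝ} (ht : t - 5 / 4 + 1 ≠ 0) :
    (1 + (8 * t + 2) * ((t - 5 / 4) / 4)) / (1 + (4 * t + 3) * ((t - 5 / 4) / 4))
      = (2 * (t - 5 / 4) + 1) / (t - 5 / 4 + 1) := by
  have hnum : 1 + (8 * t + 2) * ((t - 5 / 4) / 4) = (2 * (t - 5 / 4) + 1) * (t - 5 / 4 + 1) := by
    ring
  have hden : 1 + (4 * t + 3) * ((t - 5 / 4) / 4) = (t - 5 / 4 + 1) * (t - 5 / 4 + 1) := by
    ring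
  rw [hnum, hden, mul_div_mul_right _ _ ht]

theorem shiha_hazard_max_value_general (ω η tstar : ℝ) (hω : 0 < ω)
    (ht : 5 / 4 < tstar) (heq : (tstar - 5 / 4) * Real.exp tstar = 4 * η / ω) :
    shihaHazard ω η (tstar / ω)
      = ω * (2 * (tstar - 5 / 4) + 1) / ((tstar - 5 / 4) + 1) := by
  have hu : tstar - 5 / 4 + 1 ≠ 0 := by linarith
  rw [shihaHazard_div_eq hω.ne', mul_exp_neg_div_eq_of_critical hω.ne' heq, mul_div_assoc,
    hazard_ratio_at_critical hu, mul_div_assoc]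

theorem shiha_hazard_max_value (ω η tstar : ℝ) (hω : 0 < ω) (hη : 0 < η)
    (ht : 5 / 4 < tstar) (heq : (tstar - 5 / 4) * Real.exp tstar = 4 * η / ω) :
    shihaHazard ω η (tstar / ω)
      = ω * (2 * (tstar - 5 / 4) + 1) / ((tstar - 5 / 4) + 1) :=
  shiha_hazard_max_value_general ω η tstar hω ht heq
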